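/- arXiv:0712.2006 — 2 statements merged into one kernel-verified Lean document; each statement's English description precedes it below -/
import Mathlib

section
/- Let α ∈ (0,1) and g ∈ C_c^∞(ℝ, ℂ). Then for every t ∈ ℝ: α·(W_α g)(t) = −∫_ℝ g′(x)·sgn(t−x)·|t−x|^{−α} dx, i.e. α·W_α g equals minus the convolution of g′ with the kernel sgn(x)/|x|^α. -/
open MeasureTheory

/-- (V_α g)(t) = (1/α)·∫ g(x)·sgn(x−t)·|x−t|^{−α} dx. -/
noncomputable def Valpha (α : ℝ) (g : ℝ → ℂ) (t : ℝ) : ℂ :=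
  (α⁻¹ : ℝ) • ∫ x : ℝ, g x * ((Real.sign (x - t) * |x - t| ^ (-α) : ℝ) : ℂ)

/-- (W_α g) = (V_α g)′. -/
noncomputable def Walpha (α : ℝ) (g : ℝ → ℂ) : ℝ → ℂ :=
  deriv (Valpha α g)

open scoped Convolution

lemma measurable_realSign : Measurable Real.sign := by
  have h : Real.sign = fun r : ℝ => if r < 0 then (-1 : ℝ) else if 0 < r then 1 else 0 := rfl
  rw [h]
  exact Measurable.ite measurableSet_Iio measurable_const
    (Measurable.ite measurableSet_Ioi measurable_const measurable_const)

lemma abs_realSign_le_one (u : ℝ) : |Real.sign u| ≤ 1 := by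
  rcases Real.sign_apply_eq u with h | h | h <;> rw [h] <;> norm_num

lemma abs_rpow_intervalIntegrable (α : ℝ) (hα1 : α < 1) (c : ℝ) :
    IntervalIntegrable (fun u : ℝ => |u| ^ (-α)) volume 0 c := by
  have base : ∀ c : ℝ, 0 ≤ c → IntervalIntegrable (fun u : ℝ => |u| ^ (-α)) volume 0 c := by
    intro c hc
    have h0 : IntervalIntegrable (fun u : ℝ => u ^ (-α)) volume 0 c :=
      intervalIntegral.intervalIntegrable_rpow' (by linarith)
    rw [intervalIntegrable_iff] at h0 ⊢
    refine h0.congr_fun ?_ measurableSet_uIoc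
    intro x hx
    rw [Set.uIoc_of_le hc] at hx
    simp only
    rw [abs_of_pos hx.1]
  rcases le_total 0 c with hc | hc
  · exact base c hc
  · have h2 := base (-c) (by linarith)
    rw [IntervalIntegrable.iff_comp_neg] at h2
    simp only [neg_zero, neg_neg, abs_neg] at h2
    exact h2

lemma kernel_locallyIntegrable (α : ℝ) (hα1 : α < 1) :
    LocallyIntegrable (fun u : ℝ => Real.sign u * |u| ^ (-α)) volume := by
  rw [MeasureTheory.locallyIntegrable_iff]
  intro K hK
  obtain ⟨r, hr⟩ := hK.isBounded.subset_closedBall 0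
  have hsub : K ⊆ Set.Icc (-|r|) |r| := by
    intro x hx
    have := hr hx
    rw [Metric.mem_closedBall, Real.dist_eq, sub_zero] at this
    exact abs_le.mp (this.trans (le_abs_self r))
  refine IntegrableOn.mono_set ?_ hsub
  have h : -|r| ≤ |r| := neg_abs_le r |>.trans (le_abs_self r)
  rw [integrableOn_Icc_iff_integrableOn_Ioc]
  have habs : IntervalIntegrable (fun u : ℝ => |u| ^ (-α)) volume (-|r|) |r| :=
    (abs_rpow_intervalIntegrable α hα1 (-|r|)).symm.trans (abs_rpow_intervalIntegrable α hα1 |r|)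
  have habs' : IntegrableOn (fun u : ℝ => |u| ^ (-α)) (Set.Ioc (-|r|) |r|) volume :=
    (intervalIntegrable_iff_integrableOn_Ioc_of_le h).mp habs
  refine habs'.mono' ?_ ?_
  · exact ((measurable_realSign.mul (measurable_abs.pow_const (-α))).aestronglyMeasurable)
  · filter_upwards with u
    rw [Real.norm_eq_abs, abs_mul, abs_of_nonneg (Real.rpow_nonneg (abs_nonneg u) _)]
    calc |Real.sign u| * |u| ^ (-α) ≤ 1 * |u| ^ (-α) :=
          mul_le_mul_of_nonneg_right (abs_realSign_le_one u)
            (Real.rpow_nonneg (abs_nonneg u) _)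
      _ = |u| ^ (-α) := one_mul _

/-- For α ∈ (0,1) and g ∈ C_c^∞(ℝ,ℂ), for every t:
α·(W_α g)(t) = −∫ g′(x)·sgn(t−x)·|t−x|^{−α} dx (the integral converging absolutely). -/
theorem statement7 (α : ℝ) (hα : α ∈ Set.Ioo (0 : ℝ) 1)
    (g : ℝ → ℂ) (hg : ContDiff ℝ (⊤ : ℕ∞) g) (hgc : HasCompactSupport g) :
    ∀ t : ℝ,
      Integrable (fun x : ℝ => deriv g x * ((Real.sign (t - x) * |t - x| ^ (-α) : ℝ) : ℂ)) ∧
      (α : ℂ) * Walpha α g t = -∫ x : ℝ, deriv g x * ((Real.sign (t - x) * |t - x| ^ (-α) : ℝ) : ℂ) := by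
  obtain ⟨hα0, hα1⟩ := hα
  intro t
  set L : ℝ →L[ℝ] ℂ →L[ℝ] ℂ := ContinuousLinearMap.lsmul ℝ ℝ with hL
  set f₀ : ℝ → ℝ := fun u => -(Real.sign u * |u| ^ (-α)) with hf₀
  have hloc : LocallyIntegrable f₀ volume := (kernel_locallyIntegrable α hα1).neg
  have hg1 : ContDiff ℝ 1 g := hg.of_le (by simp)
  have hkey : ∀ τ s : ℝ, f₀ (τ - s) = Real.sign (s - τ) * |s - τ| ^ (-α) := by
    intro τ s
    rw [hf₀]
    simp only
    rw [show s - τ = -(τ - s) by ring, Real.sign_neg, abs_neg, neg_mul]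
  have hpt : ∀ x : ℝ, ((Real.sign (x - t) * |x - t| ^ (-α) : ℝ) : ℂ)
      = -((Real.sign (t - x) * |t - x| ^ (-α) : ℝ) : ℂ) := by
    intro x
    rw [show x - t = -(t - x) by ring, Real.sign_neg, abs_neg]
    push_cast
    ring
  have hconv_eq : ∀ (τ : ℝ) (h : ℝ → ℂ), (f₀ ⋆[L, volume] h) τ
      = ∫ x : ℝ, h x * ((Real.sign (x - τ) * |x - τ| ^ (-α) : ℝ) : ℂ) := by
    intro τ h
    rw [convolution_def,
      ← MeasureTheory.integral_sub_left_eq_self (fun s => L (f₀ s) (h (τ - s))) volume τ]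
    congr 1
    funext x
    simp only [sub_sub_cancel, hL, ContinuousLinearMap.lsmul_apply]
    rw [hkey τ x, Complex.real_smul, mul_comm]
  have hV : Valpha α g = fun τ => (α⁻¹ : ℝ) • (f₀ ⋆[L, volume] g) τ := by
    funext τ
    rw [Valpha, hconv_eq τ g]
  have hd := HasCompactSupport.hasDerivAt_convolution_right L hloc hgc hg1 t
  have hW : Walpha α g t = (α⁻¹ : ℝ) • (f₀ ⋆[L, volume] deriv g) t := by
    rw [Walpha, hV]
    exact (hd.const_smul (α⁻¹ : ℝ)).deriv
  constructor
  · have hce : ConvolutionExistsAt f₀ (deriv g) t L volume :=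
      HasCompactSupport.convolutionExists_right L hgc.deriv hloc (hg.continuous_deriv (by simp)) t
    have h1 := (MeasureTheory.integrable_comp_sub_left
      (fun s => L (f₀ s) (deriv g (t - s))) t).mpr hce
    have heq : (fun x : ℝ => -(L (f₀ (t - x)) (deriv g (t - (t - x)))))
        = fun x : ℝ => deriv g x * ((Real.sign (t - x) * |t - x| ^ (-α) : ℝ) : ℂ) := by
      funext x
      simp only [sub_sub_cancel, hL, ContinuousLinearMap.lsmul_apply]
      rw [hkey t x, Complex.real_smul, hpt x]
      ring
    exact heq ▸ h1.neg
  · have hα0' : (α : ℂ) ≠ 0 := by exact_mod_cast hα0.ne'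
    rw [hW, Complex.real_smul]
    push_cast
    rw [← mul_assoc, mul_inv_cancel₀ hα0', one_mul, hconv_eq t (deriv g), ← integral_neg]
    congr 1
    funext x
    rw [hpt x]
    push_cast
    ring
end

section
/- Let β ∈ (1,2). There exists p₀ ∈ (0, 1/β) such that for every p ∈ (0, p₀) the integral J(p) = ∫_ℝ (|1 − |t|^{−β}|^p − 1) dt converges absolutely and J(p) < 0. -/
/-!
Write `Y t = |1 - |t| ^ (-β)|` and `a = 1 / (4β)`. For `0 < p ≤ a` the elementary bound
`|Y ^ p - 1| ≤ p |log Y| (1 + Y ^ a)` holds, and `|log Y| (1 + Y ^ a)` is integrable: its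
singularities at `0` and `±1` are powers of order `< 1` and it decays like `|t| ^ (-β)`. Hence
`J p / p → ∫ log Y` as `p → 0⁺` by dominated convergence, so it suffices that `∫ log Y < 0`.
That follows by comparison with `β = 2`: `Y` strictly increases with `β` off `{0, ±1}`, and
`∫ log |1 - t ^ (-2)| = 0`, because `(t-1) log (t-1) + (t+1) log (t+1) - 2 t log t` is a
primitive vanishing at `0` and at infinity.
-/

open MeasureTheory Set Real Filter Topology

namespace Real

theorem abs_exp_sub_one_le_abs_mul_max (w : ℝ) : |exp w - 1| ≤ |w| * max 1 (exp w) := by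
  rcases le_total w 0 with hw | hw
  · have h : w + 1 ≤ exp w := add_one_le_exp w
    rw [abs_of_nonpos (by linarith [exp_le_one_iff.mpr hw]), abs_of_nonpos hw]
    nlinarith [le_max_left 1 (exp w)]
  · have h : 1 - w ≤ exp (-w) := by linarith [add_one_le_exp (-w)]
    have h' : exp w - 1 ≤ w * exp w := by
      have := mul_le_mul_of_nonneg_right h (exp_pos w).le
      rw [← exp_add, neg_add_cancel, exp_zero] at this
      linarith
    rw [abs_of_nonneg (by linarith [one_le_exp hw]), abs_of_nonneg hw]
    exact h'.trans (mul_le_mul_of_nonneg_left (le_max_right _ _) hw)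

theorem abs_rpow_sub_one_le {y p a : ℝ} (hy : 0 < y) (hp : 0 ≤ p) (hpa : p ≤ a) :
    |y ^ p - 1| ≤ p * (|log y| * (1 + y ^ a)) := by
  have hmax : max 1 (y ^ p) ≤ 1 + y ^ a := by
    rcases le_total y 1 with hy1 | hy1
    · exact max_le (by linarith [rpow_nonneg hy.le a])
        (by linarith [rpow_le_one hy.le hy1 hp, rpow_nonneg hy.le a])
    · exact max_le (by linarith [rpow_nonneg hy.le a])
        (by linarith [rpow_le_rpow_of_exponent_le hy1 hpa])
  calc |y ^ p - 1| ≤ |log y * p| * max 1 (y ^ p) := by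
        simpa only [← rpow_def_of_pos hy] using abs_exp_sub_one_le_abs_mul_max (log y * p)
    _ ≤ p * (|log y| * (1 + y ^ a)) := by
        rw [abs_mul, abs_of_nonneg hp, mul_comm |log y| p, mul_assoc]
        gcongr

theorem tendsto_inv_mul_rpow_sub_one {y : ℝ} (hy : 0 < y) :
    Tendsto (fun p => p⁻¹ * (y ^ p - 1)) (𝓝[>] 0) (𝓝 (log y)) := by
  simpa using (hasStrictDerivAt_const_rpow hy 0).hasDerivAt.tendsto_slope_zero_right

theorem abs_log_mul_one_add_rpow_le {y ε : ℝ} (hy : 0 ≤ y) (hε : 0 < ε) :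
    |log y| * (1 + y ^ ε) ≤ 2 / ε * (y ^ (-ε) + y ^ (2 * ε)) := by
  rcases hy.eq_or_lt with rfl | hy
  · simp [zero_rpow hε.ne', zero_rpow (neg_ne_zero.mpr hε.ne'),
      zero_rpow (mul_pos two_pos hε).ne']
  rcases le_total y 1 with hy1 | hy1
  · have hlog : |log y| ≤ y ^ (-ε) / ε := by
      rw [abs_of_nonpos (log_nonpos hy.le hy1), ← log_inv, rpow_neg hy.le, ← inv_rpow hy.le]
      exact log_le_rpow_div (inv_nonneg.mpr hy.le) hε
    have h1 : 1 + y ^ ε ≤ 2 := by linarith [rpow_le_one hy.le hy1 hε.le]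
    calc |log y| * (1 + y ^ ε) ≤ y ^ (-ε) / ε * 2 :=
          mul_le_mul hlog h1 (by positivity) (by positivity)
      _ = 2 / ε * y ^ (-ε) := by ring
      _ ≤ 2 / ε * (y ^ (-ε) + y ^ (2 * ε)) := by
          gcongr
          linarith [rpow_nonneg hy.le (2 * ε)]
  · have hlog : |log y| ≤ y ^ ε / ε := by
      rw [abs_of_nonneg (log_nonneg hy1)]
      exact log_le_rpow_div hy.le hε
    have h1 : 1 + y ^ ε ≤ 2 * y ^ ε := by linarith [one_le_rpow hy1 hε.le]
    calc |log y| * (1 + y ^ ε) ≤ y ^ ε / ε * (2 * y ^ ε) :=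
          mul_le_mul hlog h1 (by positivity) (by positivity)
      _ = 2 / ε * y ^ (2 * ε) := by
          rw [two_mul ε, rpow_add hy]; ring
      _ ≤ 2 / ε * (y ^ (-ε) + y ^ (2 * ε)) := by
          gcongr
          linarith [rpow_nonneg hy.le (-ε)]

theorem abs_log_one_sub_le {x : ℝ} (hx0 : 0 ≤ x) (hx : x ≤ 1 / 2) :
    |log (1 - x)| ≤ 2 * x := by
  have hpos : 0 < 1 - x := by linarith
  have hlow : 1 - (1 - x)⁻¹ ≤ log (1 - x) := one_sub_inv_le_log_of_pos hpos
  have hx2 : -(2 * x) ≤ 1 - (1 - x)⁻¹ := by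
    rw [neg_le_sub_iff_le_add, inv_le_iff_one_le_mul₀ hpos]
    nlinarith
  rw [abs_of_nonpos (log_nonpos hpos.le (by linarith))]
  linarith

theorem abs_one_sub_rpow_neg_le {t β γ : ℝ} (ht : 0 < t) (hβ : 0 ≤ β) (hβγ : β ≤ γ) :
    |1 - t ^ (-β)| ≤ |1 - t ^ (-γ)| := by
  rcases le_total t 1 with ht1 | ht1
  · have h1 : 1 ≤ t ^ (-β) := one_le_rpow_of_pos_of_le_one_of_nonpos ht ht1 (by linarith)
    have h2 : t ^ (-β) ≤ t ^ (-γ) := rpow_le_rpow_of_exponent_ge ht ht1 (by linarith)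
    rw [abs_sub_comm, abs_of_nonneg (by linarith), abs_sub_comm, abs_of_nonneg (by linarith)]
    linarith
  · have h1 : t ^ (-β) ≤ 1 := rpow_le_one_of_one_le_of_nonpos ht1 (by linarith)
    have h2 : t ^ (-γ) ≤ t ^ (-β) := rpow_le_rpow_of_exponent_le ht1 (by linarith)
    rw [abs_of_nonneg (by linarith), abs_of_nonneg (by linarith)]
    linarith

theorem abs_one_sub_rpow_neg_lt {t β γ : ℝ} (ht : 0 < t) (ht1 : t ≠ 1) (hβ : 0 ≤ β)
    (hβγ : β < γ) : |1 - t ^ (-β)| < |1 - t ^ (-γ)| := by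
  rcases ht1.lt_or_gt with ht1 | ht1
  · have h1 : 1 ≤ t ^ (-β) := one_le_rpow_of_pos_of_le_one_of_nonpos ht ht1.le (by linarith)
    have h2 : t ^ (-β) < t ^ (-γ) := rpow_lt_rpow_of_exponent_gt ht ht1 (by linarith)
    rw [abs_sub_comm, abs_of_nonneg (by linarith), abs_sub_comm, abs_of_nonneg (by linarith)]
    linarith
  · have h1 : t ^ (-β) ≤ 1 := rpow_le_one_of_one_le_of_nonpos ht1.le (by linarith)
    have h2 : t ^ (-γ) < t ^ (-β) := rpow_lt_rpow_of_exponent_lt ht1 (by linarith)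
    rw [abs_of_nonneg (by linarith), abs_of_nonneg (by linarith)]
    linarith

theorem abs_one_sub_rpow_neg_pos {t β : ℝ} (ht : 0 ≤ t) (ht1 : t ≠ 1) (hβ : 0 < β) :
    0 < |1 - t ^ (-β)| := by
  rcases ht.eq_or_lt with rfl | ht
  · simp [zero_rpow (neg_ne_zero.mpr hβ.ne')]
  · simpa using abs_one_sub_rpow_neg_lt ht ht1 le_rfl hβ

end Real

section RpowSubOne

variable {α : Type*} [MeasurableSpace α] {μ : Measure α} {g : α → ℝ} {a : ℝ}

theorem integrable_rpow_sub_one (hg : ∀ᵐ x ∂μ, 0 < g x) (hgm : AEMeasurable g μ)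
    (hint : Integrable (fun x => |log (g x)| * (1 + g x ^ a)) μ) {p : ℝ} (hp : 0 ≤ p)
    (hpa : p ≤ a) : Integrable (fun x => g x ^ p - 1) μ := by
  refine (hint.const_mul p).mono' ((hgm.pow_const p).sub_const 1).aestronglyMeasurable ?_
  filter_upwards [hg] with x hx
  exact abs_rpow_sub_one_le hx hp hpa

theorem tendsto_integral_inv_mul_rpow_sub_one (hg : ∀ᵐ x ∂μ, 0 < g x) (hgm : AEMeasurable g μ)
    (ha : 0 < a) (hint : Integrable (fun x => |log (g x)| * (1 + g x ^ a)) μ) :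
    Tendsto (fun p => ∫ x, p⁻¹ * (g x ^ p - 1) ∂μ) (𝓝[>] 0) (𝓝 (∫ x, log (g x) ∂μ)) := by
  refine tendsto_integral_filter_of_dominated_convergence _ (Eventually.of_forall fun p =>
    (((hgm.pow_const p).sub_const 1).const_mul p⁻¹).aestronglyMeasurable) ?_ hint ?_
  · filter_upwards [Ioo_mem_nhdsGT ha] with p hp
    filter_upwards [hg] with x hx
    rw [norm_mul, norm_inv, norm_of_nonneg hp.1.le, inv_mul_le_iff₀ hp.1]
    exact abs_rpow_sub_one_le hx hp.1.le hp.2.le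
  · filter_upwards [hg] with x hx
    exact tendsto_inv_mul_rpow_sub_one hx

end RpowSubOne

theorem intervalIntegrable_abs_rpow {r : ℝ} (hr : -1 < r) (a b : ℝ) :
    IntervalIntegrable (fun x => |x| ^ r) volume a b := by
  suffices ∀ c : ℝ, IntervalIntegrable (fun x => |x| ^ r) volume 0 c from
    (this a).symm.trans (this b)
  have hpos : ∀ c, 0 ≤ c → IntervalIntegrable (fun x => |x| ^ r) volume 0 c := fun c hc =>
    (intervalIntegral.intervalIntegrable_rpow' hr).congr <| by
      rw [uIoc_of_le hc]
      exact fun x hx => by simp only [abs_of_pos hx.1]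
  intro c
  rcases le_total 0 c with hc | hc
  · exact hpos c hc
  · rw [IntervalIntegrable.iff_comp_neg]
    simpa only [abs_neg, neg_zero] using hpos (-c) (by linarith)

theorem integrable_comp_abs {E : Type*} [NormedAddCommGroup E] {f : ℝ → E}
    (hf : IntegrableOn f (Ioi 0)) : Integrable (fun x => f |x|) := by
  have hIoi : IntegrableOn (fun x => f |x|) (Ioi 0) :=
    hf.congr_fun (fun x hx => by simp only [abs_of_pos (mem_Ioi.mp hx)]) measurableSet_Ioi
  have hIic : IntegrableOn (fun x => f |x|) (Iic 0) := by
    have hneg : MeasurableEmbedding fun x : ℝ => -x := (Homeomorph.neg ℝ).measurableEmbedding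
    rw [← Measure.map_neg_eq_self (volume : Measure ℝ), hneg.integrableOn_map_iff]
    simpa [Function.comp_def, integrableOn_Ici_iff_integrableOn_Ioi] using hIoi
  simpa [← integrableOn_univ] using hIic.union hIoi

theorem integral_Ioi_of_hasDerivAt_off_countable_of_tendsto {f f' : ℝ → ℝ} {a m : ℝ}
    {s : Set ℝ} (hs : s.Countable) (hcont : ContinuousOn f (Ici a))
    (hderiv : ∀ x ∈ Ioi a \ s, HasDerivAt f (f' x) x) (f'int : IntegrableOn f' (Ioi a))
    (hf : Tendsto f atTop (𝓝 m)) : ∫ x in Ioi a, f' x = m - f a := by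
  refine tendsto_nhds_unique (intervalIntegral_tendsto_integral_Ioi a f'int tendsto_id) ?_
  refine (hf.sub_const (f a)).congr' ?_
  filter_upwards [eventually_ge_atTop a] with b hb
  have hint : IntervalIntegrable f' volume a b :=
    (intervalIntegrable_iff_integrableOn_Ioc_of_le hb).mpr (f'int.mono_set Ioc_subset_Ioi_self)
  exact (integral_eq_of_hasDerivAt_off_countable_of_le f f' hb hs
    (hcont.mono Icc_subset_Ici_self) (fun x hx => hderiv x ⟨hx.1.1, hx.2⟩) hint).symm

namespace Real

theorem abs_log_mul_one_add_rpow_le_of_le_two {t β a : ℝ} (ht0 : 0 < t) (ht2 : t ≤ 2)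
    (hβ : 1 ≤ β) (ha : 0 < a) (haβ : 2 * a * β ≤ 1) :
    |log (|1 - t ^ (-β)|)| * (1 + |1 - t ^ (-β)| ^ a) ≤
      2 / a * ((|t - 1| / 2) ^ (-a) + (1 + t ^ (-(2 * a * β)))) := by
  set y := |1 - t ^ (-β)|
  -- `y ≥ |1 - t⁻¹| ≥ |t - 1| / 2` tames the singularity at `1`, `y ≤ 1 + t ^ (-β)` the one
  -- at `0`.
  have hlow : y ^ (-a) ≤ (|t - 1| / 2) ^ (-a) := by
    rcases eq_or_ne t 1 with rfl | ht1
    · simp [y, zero_rpow (neg_ne_zero.mpr ha.ne')]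
    have hpos : 0 < |t - 1| / 2 := half_pos (abs_pos.mpr (sub_ne_zero.mpr ht1))
    have h1 : |t - 1| / 2 ≤ |1 - t ^ (-(1 : ℝ))| := by
      rw [rpow_neg_one, show 1 - t⁻¹ = (t - 1) / t by field_simp, abs_div, abs_of_pos ht0]
      gcongr
    exact rpow_le_rpow_of_nonpos hpos (h1.trans (abs_one_sub_rpow_neg_le ht0 zero_le_one hβ))
      (by linarith)
  have hup : y ^ (2 * a) ≤ 1 + t ^ (-(2 * a * β)) := by
    have hx : 0 ≤ t ^ (-β) := rpow_nonneg ht0.le _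
    calc y ^ (2 * a) ≤ (1 + t ^ (-β)) ^ (2 * a) := by
          gcongr
          exact (abs_sub _ _).trans (by rw [abs_one, abs_of_nonneg hx])
      _ ≤ 1 ^ (2 * a) + (t ^ (-β)) ^ (2 * a) :=
          rpow_add_le_add_rpow zero_le_one hx (by positivity) (by nlinarith)
      _ = 1 + t ^ (-(2 * a * β)) := by
          rw [one_rpow, ← rpow_mul ht0.le]; ring_nf
  calc |log y| * (1 + y ^ a) ≤ 2 / a * (y ^ (-a) + y ^ (2 * a)) :=
        abs_log_mul_one_add_rpow_le (abs_nonneg _) ha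
    _ ≤ 2 / a * ((|t - 1| / 2) ^ (-a) + (1 + t ^ (-(2 * a * β)))) := by gcongr

theorem abs_log_mul_one_add_rpow_le_of_two_le {t β a : ℝ} (ht : 2 ≤ t) (hβ : 1 ≤ β)
    (ha : 0 ≤ a) : |log (|1 - t ^ (-β)|)| * (1 + |1 - t ^ (-β)| ^ a) ≤ 4 * t ^ (-β) := by
  have hx0 : 0 ≤ t ^ (-β) := rpow_nonneg (by linarith) _
  have hx : t ^ (-β) ≤ 1 / 2 := by
    calc t ^ (-β) ≤ t ^ (-(1 : ℝ)) := rpow_le_rpow_of_exponent_le (by linarith) (by linarith)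
      _ ≤ 1 / 2 := by rw [rpow_neg_one, one_div]; exact inv_anti₀ two_pos ht
  have hy : |1 - t ^ (-β)| = 1 - t ^ (-β) := abs_of_nonneg (by linarith)
  have h1 : 1 + (1 - t ^ (-β)) ^ a ≤ 2 := by
    linarith [rpow_le_one (by linarith) (by linarith : 1 - t ^ (-β) ≤ 1) ha]
  rw [hy]
  calc |log (1 - t ^ (-β))| * (1 + (1 - t ^ (-β)) ^ a) ≤ 2 * t ^ (-β) * 2 :=
        mul_le_mul (abs_log_one_sub_le hx0 hx) h1
          (add_nonneg zero_le_one (rpow_nonneg (by linarith) _)) (by linarith)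
    _ = 4 * t ^ (-β) := by ring

theorem integrableOn_Ioi_abs_log_mul_one_add_rpow {β a : ℝ} (hβ : 1 < β) (ha : 0 < a)
    (haβ : 2 * a * β < 1) :
    IntegrableOn (fun t => |log (|1 - t ^ (-β)|)| * (1 + |1 - t ^ (-β)| ^ a)) (Ioi 0) := by
  have hmeas : AEStronglyMeasurable
      (fun t : ℝ => |log (|1 - t ^ (-β)|)| * (1 + |1 - t ^ (-β)| ^ a)) volume := by
    fun_prop
  have hnonneg (t : ℝ) : 0 ≤ |log (|1 - t ^ (-β)|)| * (1 + |1 - t ^ (-β)| ^ a) := by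
    positivity
  rw [← Ioc_union_Ioi_eq_Ioi zero_le_two]
  refine IntegrableOn.union ?_ ?_
  · have hdom : IntegrableOn
        (fun t => 2 / a * ((|t - 1| / 2) ^ (-a) + (1 + t ^ (-(2 * a * β))))) (Ioc 0 2) := by
      have hsing : IntervalIntegrable (fun t => (|t - 1| / 2) ^ (-a)) volume 0 2 := by
        have := (intervalIntegrable_abs_rpow (r := -a) (by nlinarith) (-1) 1).comp_sub_right 1
        norm_num at this
        simpa only [div_rpow (abs_nonneg _) zero_le_two] using this.div_const (2 ^ (-a))
      have hpow : IntervalIntegrable (fun t : ℝ => 1 + t ^ (-(2 * a * β))) volume 0 2 :=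
        intervalIntegrable_const.add
          (intervalIntegral.intervalIntegrable_rpow' (r := -(2 * a * β)) (by linarith))
      exact ((intervalIntegrable_iff_integrableOn_Ioc_of_le zero_le_two).mp
        (hsing.add hpow)).const_mul _
    refine hdom.mono' hmeas.restrict (ae_restrict_of_forall_mem measurableSet_Ioc fun t ht => ?_)
    rw [norm_of_nonneg (hnonneg t)]
    exact abs_log_mul_one_add_rpow_le_of_le_two ht.1 ht.2 hβ.le ha haβ.le
  · have hdom : IntegrableOn (fun t : ℝ => 4 * t ^ (-β)) (Ioi 2) :=
      (integrableOn_Ioi_rpow_of_lt (by linarith) two_pos).const_mul 4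
    refine hdom.mono' hmeas.restrict (ae_restrict_of_forall_mem measurableSet_Ioi fun t ht => ?_)
    rw [norm_of_nonneg (hnonneg t)]
    exact abs_log_mul_one_add_rpow_le_of_two_le (le_of_lt ht) hβ.le ha.le

theorem integrableOn_Ioi_log_abs_one_sub_rpow_neg {β : ℝ} (hβ : 1 < β) :
    IntegrableOn (fun t => log (|1 - t ^ (-β)|)) (Ioi 0) := by
  have hβ0 : 0 < β := by linarith
  refine (integrableOn_Ioi_abs_log_mul_one_add_rpow hβ (a := 1 / (4 * β)) (by positivity)
    (by field_simp; norm_num)).mono'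
    (by fun_prop : Measurable fun t : ℝ => log (|1 - t ^ (-β)|)).aestronglyMeasurable
    (ae_of_all _ fun t => ?_)
  rw [norm_eq_abs]
  exact le_mul_of_one_le_right (abs_nonneg _)
    (le_add_of_nonneg_right (rpow_nonneg (abs_nonneg _) _))

/-- Since `Real.log x = Real.log |x|`, this is a primitive of `log |1 - t ^ (-2)|` on both
`(0, 1)` and `(1, ∞)`, continuous across `1`. -/
noncomputable def mulLogSecondDiff (t : ℝ) : ℝ :=
  (t - 1) * log (t - 1) + (t + 1) * log (t + 1) - 2 * (t * log t)

theorem continuous_mulLogSecondDiff : Continuous mulLogSecondDiff := by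
  unfold mulLogSecondDiff
  fun_prop

theorem mulLogSecondDiff_zero : mulLogSecondDiff 0 = 0 := by
  simp [mulLogSecondDiff]

theorem hasDerivAt_mulLogSecondDiff {t : ℝ} (ht : 0 < t) (ht1 : t ≠ 1) :
    HasDerivAt mulLogSecondDiff (log (|1 - t ^ (-2 : ℝ)|)) t := by
  have hm : t - 1 ≠ 0 := sub_ne_zero.mpr ht1
  have hp : t + 1 ≠ 0 := by positivity
  have hderiv : HasDerivAt mulLogSecondDiff
      ((log (t - 1) + 1) * 1 + (log (t + 1) + 1) * 1 - 2 * (log t + 1)) t := by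
    have h := (((hasDerivAt_mul_log hm).comp t ((hasDerivAt_id t).sub_const 1)).add
      ((hasDerivAt_mul_log hp).comp t ((hasDerivAt_id t).add_const 1))).sub
      ((hasDerivAt_mul_log ht.ne').const_mul 2)
    exact h
  convert hderiv using 1
  have h : 1 - t ^ (-2 : ℝ) = (t - 1) * (t + 1) / t ^ 2 := by
    rw [rpow_neg ht.le, rpow_two]; field_simp; ring
  rw [h, log_abs, log_div (mul_ne_zero hm hp) (by positivity), log_mul hm hp, log_pow]
  ring

theorem tendsto_mulLogSecondDiff_atTop : Tendsto mulLogSecondDiff atTop (𝓝 0) := by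
  have hlim (c : ℝ) : Tendsto (fun t : ℝ => 1 + c / t) atTop (𝓝 1) := by
    simpa using tendsto_const_nhds.add ((tendsto_const_nhds (x := c)).div_atTop tendsto_id)
  have hsum := ((tendsto_mul_log_one_add_div_atTop 1).add
    (tendsto_mul_log_one_add_div_atTop (-1))).add
    (((hlim 1).log one_ne_zero).sub ((hlim (-1)).log one_ne_zero))
  rw [log_one, sub_zero, add_zero, add_neg_cancel] at hsum
  refine hsum.congr' ?_
  filter_upwards [eventually_gt_atTop 1] with t ht
  have ht0 : t ≠ 0 := by positivity
  have hplus : log (1 + 1 / t) = log (t + 1) - log t := by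
    rw [← log_div (by positivity) ht0]; congr 1; field_simp
  have hminus : log (1 + -1 / t) = log (t - 1) - log t := by
    rw [← log_div (by linarith) ht0]; congr 1; field_simp; ring
  rw [hplus, hminus, mulLogSecondDiff]
  ring

theorem setIntegral_Ioi_log_abs_one_sub_rpow_neg_two :
    ∫ t in Ioi 0, log (|1 - t ^ (-2 : ℝ)|) = 0 := by
  rw [integral_Ioi_of_hasDerivAt_off_countable_of_tendsto (countable_singleton 1)
    continuous_mulLogSecondDiff.continuousOn (fun t ht => hasDerivAt_mulLogSecondDiff ht.1 ht.2)
    (integrableOn_Ioi_log_abs_one_sub_rpow_neg one_lt_two) tendsto_mulLogSecondDiff_atTop,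
    mulLogSecondDiff_zero, sub_zero]

theorem setIntegral_Ioi_log_abs_one_sub_rpow_neg_lt_zero {β : ℝ} (hβ1 : 1 < β) (hβ2 : β < 2) :
    ∫ t in Ioi 0, log (|1 - t ^ (-β)|) < 0 := by
  have hβint := integrableOn_Ioi_log_abs_one_sub_rpow_neg hβ1
  have h2int := integrableOn_Ioi_log_abs_one_sub_rpow_neg one_lt_two
  suffices 0 < ∫ t in Ioi 0, (log (|1 - t ^ (-2 : ℝ)|) - log (|1 - t ^ (-β)|)) by
    rw [integral_sub h2int hβint, setIntegral_Ioi_log_abs_one_sub_rpow_neg_two] at this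
    linarith
  have hlt {t : ℝ} (ht : 0 < t) (ht1 : t ≠ 1) :
      0 < log (|1 - t ^ (-2 : ℝ)|) - log (|1 - t ^ (-β)|) :=
    sub_pos.mpr (log_lt_log (abs_one_sub_rpow_neg_pos ht.le ht1 (by linarith))
      (abs_one_sub_rpow_neg_lt ht ht1 (by linarith) hβ2))
  rw [setIntegral_pos_iff_support_of_nonneg_ae]
  · refine (by simp : (0 : ENNReal) < volume (Ioi (1 : ℝ))).trans_le
      (measure_mono fun t ht => ?_)
    have ht0 : 0 < t := zero_lt_one.trans ht
    exact ⟨(hlt ht0 (ne_of_gt ht)).ne', ht0⟩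
  · filter_upwards [ae_restrict_mem measurableSet_Ioi,
      ae_restrict_of_ae ((countable_singleton 1).ae_notMem volume)] with t ht ht1
    exact (hlt ht ht1).le
  · exact h2int.sub hβint

end Real

/-- For β ∈ (1,2) there exists p₀ ∈ (0, 1/β) such that for every
p ∈ (0, p₀) the integral J(p) = ∫ (|1 − |t|^{−β}|^p − 1) dt converges absolutely
and J(p) < 0. -/
theorem statement9 (β : ℝ) (hβ : β ∈ Set.Ioo (1 : ℝ) 2) :
    ∃ p₀ ∈ Set.Ioo (0 : ℝ) (1 / β), ∀ p ∈ Set.Ioo (0 : ℝ) p₀,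
      Integrable (fun t : ℝ => |1 - |t| ^ (-β)| ^ p - 1) ∧
      ∫ t : ℝ, (|1 - |t| ^ (-β)| ^ p - 1) < 0 := by
  obtain ⟨hβ1, hβ2⟩ := hβ
  have hβ0 : 0 < β := by linarith
  set a := 1 / (4 * β)
  have ha : 0 < a := by positivity
  have haβ : a < 1 / β := one_div_lt_one_div_of_lt hβ0 (by linarith)
  have h2aβ : 2 * a * β < 1 := by simp only [a]; field_simp; norm_num
  have hpos : ∀ᵐ t : ℝ, 0 < |1 - |t| ^ (-β)| := by
    filter_upwards [((countable_singleton 1).insert (-1)).ae_notMem volume] with t ht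
    refine abs_one_sub_rpow_neg_pos (abs_nonneg t) (fun h => ht ?_) hβ0
    rcases (abs_eq zero_le_one).mp h with h | h <;> simp [h]
  have hmeas : AEMeasurable (fun t : ℝ => |1 - |t| ^ (-β)|) := by fun_prop
  have hint : Integrable fun t : ℝ => |log (|1 - |t| ^ (-β)|)| * (1 + |1 - |t| ^ (-β)| ^ a) :=
    integrable_comp_abs (integrableOn_Ioi_abs_log_mul_one_add_rpow hβ1 ha h2aβ)
  have hlog : ∫ t : ℝ, log (|1 - |t| ^ (-β)|) < 0 := by
    rw [integral_comp_abs (f := fun s => log (|1 - s ^ (-β)|))]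
    linarith [setIntegral_Ioi_log_abs_one_sub_rpow_neg_lt_zero hβ1 hβ2]
  obtain ⟨δ, hδ, hδneg⟩ := mem_nhdsGT_iff_exists_Ioo_subset.mp
    ((tendsto_integral_inv_mul_rpow_sub_one hpos hmeas ha hint).eventually (gt_mem_nhds hlog))
  refine ⟨min δ a, ⟨lt_min hδ ha, (min_le_right δ a).trans_lt haβ⟩, fun p hp => ⟨?_, ?_⟩⟩
  · exact integrable_rpow_sub_one hpos hmeas hint hp.1.le (hp.2.le.trans (min_le_right δ a))
  · have h : p⁻¹ * ∫ t : ℝ, (|1 - |t| ^ (-β)| ^ p - 1) < 0 := by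
      rw [← integral_const_mul]
      exact hδneg ⟨hp.1, hp.2.trans_le (min_le_left δ a)⟩
    exact neg_of_mul_neg_right h (inv_nonneg.mpr hp.1.le)
end
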